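/- arXiv:2003.11789 — 5 statements merged into one kernel-verified Lean document; each statement's English description precedes it below -/
import Mathlib

section
/- Two command words x and y are equivalent (related by the reflexive-transitive closure of swapping adjacent commuting commands) if and only if they contain the same multiset of command occurrences and order non-commuting occurrences identically: occ(x) = occ(y) and for all commands c, d with ¬(c ~ d) and all occurrence indices i, j, the i-th occurrence of c precedes the j-th occurrence of d in x iff it does so in y. -/
/-!
A swap of adjacent commuting letters at positions `n + 1`, `n + 2` moves the occurrences by the
transposition of these two positions. This preserves the relative order of any two occurrences
except the swapped pair, and that pair commutes.

Conversely, let `a :: x` and `y` have the same occurrences, with non-commuting occurrences in the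
same order. Every letter `b` in front of the first `a` of `y` commutes with `a`, for otherwise the
first `a` and the first `b` would be ordered differently in the two words. So `a` can be moved to
the front of `y`. What remains of `y` has the same occurrences as `x`, ordered in the same way, and
we conclude by induction on `x`.
-/

/-- One transposition of two adjacent commuting commands. -/
def SwapStep {C : Type*} (comm : C → C → Prop) (x y : List C) : Prop :=
  ∃ (z w : List C) (c d : C), comm c d ∧ x = z ++ c :: d :: w ∧ y = z ++ d :: c :: w

/-- Equivalence of command words generated by transposing adjacent commuting
commands. -/
def WordEquiv {C : Type*} (comm : C → C → Prop) : List C → List C → Prop :=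
  Relation.ReflTransGen (SwapStep comm)

/-- 1-based position of the k-th occurrence of `c` in a word, `0` if absent. -/
def pos {C : Type*} [DecidableEq C] (c : C) : ℕ → List C → ℕ
  | _, [] => 0
  | k, a :: l =>
    if a = c then
      if k ≤ 1 then (if k = 1 then 1 else 0)
      else match pos c (k - 1) l with
        | 0 => 0
        | p => p + 1
    else match pos c k l with
      | 0 => 0
      | p => p + 1

/-- The set of command occurrences of a word: pairs `(c, i)` with `c`
occurring at least `i ≥ 1` times. -/
def occ {C : Type*} [DecidableEq C] (x : List C) : Set (C × ℕ) :=
  {p | 1 ≤ p.2 ∧ p.2 ≤ x.count p.1}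

-- the effect on `pos` of prepending a letter; `0` encodes absence and stays `0`
def shiftPos : ℕ → ℕ
  | 0 => 0
  | p + 1 => p + 2

lemma shiftPos_of_ne_zero {p : ℕ} (h : p ≠ 0) : shiftPos p = p + 1 := by
  obtain ⟨q, rfl⟩ := Nat.exists_eq_succ_of_ne_zero h
  rfl

lemma shiftPos_ne_one (q : ℕ) : shiftPos q ≠ 1 := by
  cases q <;> simp [shiftPos]

lemma eq_of_shiftPos_eq_succ {q p : ℕ} (h : shiftPos q = p + 1) : q = p := by
  cases q <;> simp only [shiftPos] at h <;> omega

lemma shiftPos_swap (n q : ℕ) :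
    shiftPos (Equiv.swap (n + 1) (n + 2) q) = Equiv.swap (n + 2) (n + 3) (shiftPos q) := by
  rcases q with _ | q
  · rfl
  · simp only [Equiv.swap_apply_def]
    split_ifs <;> simp_all [shiftPos]

lemma swap_one_two_shiftPos_shiftPos (q : ℕ) :
    Equiv.swap 1 2 (shiftPos (shiftPos q)) = shiftPos (shiftPos q) := by
  cases q <;> rfl

lemma swap_lt_swap_iff {n p q : ℕ} (hpq : ¬(p = n + 1 ∧ q = n + 2))
    (hqp : ¬(p = n + 2 ∧ q = n + 1)) :
    Equiv.swap (n + 1) (n + 2) p < Equiv.swap (n + 1) (n + 2) q ↔ p < q := by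
  simp only [Equiv.swap_apply_def]
  split_ifs <;> omega

section

variable {C : Type*}

lemma WordEquiv.cons {comm : C → C → Prop} (a : C) {x y : List C} (h : WordEquiv comm x y) :
    WordEquiv comm (a :: x) (a :: y) := by
  refine Relation.ReflTransGen.lift (a :: ·) (fun x y hxy => ?_) _ _ h
  obtain ⟨z, w, c, d, hcd, rfl, rfl⟩ := hxy
  exact ⟨a :: z, w, c, d, hcd, rfl, rfl⟩

lemma wordEquiv_cons_append {comm : C → C → Prop} {a : C} {u v : List C}
    (h : ∀ b ∈ u, comm a b) : WordEquiv comm (a :: (u ++ v)) (u ++ a :: v) := by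
  induction u with
  | nil => exact .refl
  | cons b u ih =>
    have hstep : SwapStep comm (a :: b :: (u ++ v)) (b :: a :: (u ++ v)) :=
      ⟨[], u ++ v, a, b, h b List.mem_cons_self, rfl, rfl⟩
    exact .head hstep (WordEquiv.cons b (ih fun c hc => h c (List.mem_cons_of_mem b hc)))

end

section

variable {C : Type*} [DecidableEq C]

lemma mem_occ {c : C} {i : ℕ} {l : List C} : (c, i) ∈ occ l ↔ 1 ≤ i ∧ i ≤ l.count c :=
  Iff.rfl

lemma occ_eq_occ_iff_perm {x y : List C} : occ x = occ y ↔ x.Perm y := by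
  rw [List.perm_iff_count]
  constructor
  · intro h e
    refine eq_of_forall_le_iff fun n => ?_
    rcases Nat.eq_zero_or_pos n with rfl | hn
    · simp
    · exact and_congr_right_iff.mp (Set.ext_iff.mp h (e, n)) hn
  · intro h
    ext ⟨c, i⟩
    simp only [mem_occ, h]

lemma mem_occ_one {c : C} {l : List C} : (c, 1) ∈ occ l ↔ c ∈ l := by
  rw [mem_occ, ← List.count_pos_iff]
  omega

lemma mem_occ_cons (a : C) {e : C} {k : ℕ} {l : List C} (h : (e, k) ∈ occ l) :
    (e, k + if a = e then 1 else 0) ∈ occ (a :: l) := by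
  simp only [mem_occ, List.count_cons, beq_iff_eq] at h ⊢
  split_ifs <;> omega

lemma pos_zero (c : C) (l : List C) : pos c 0 l = 0 := by
  induction l with
  | nil => rfl
  | cons a l ih =>
    by_cases h : a = c
    · simp [pos, h]
    · simp [pos, h, ih]

lemma pos_cons_of_ne {a c : C} (h : a ≠ c) (k : ℕ) (l : List C) :
    pos c k (a :: l) = shiftPos (pos c k l) := by
  rw [pos, if_neg h]
  cases pos c k l <;> rfl

lemma pos_cons_self_one (c : C) (l : List C) : pos c 1 (c :: l) = 1 := by
  simp [pos]

lemma pos_cons_self_succ (c : C) {k : ℕ} (hk : k ≠ 0) (l : List C) :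
    pos c (k + 1) (c :: l) = shiftPos (pos c k l) := by
  rw [pos, if_pos rfl, if_neg (by omega), Nat.add_sub_cancel]
  cases pos c k l <;> rfl

lemma pos_ne_zero_of_mem_occ {c : C} {k : ℕ} {l : List C} (h : (c, k) ∈ occ l) :
    pos c k l ≠ 0 := by
  induction l generalizing k with
  | nil =>
    have : k ≤ 0 := h.2
    exact absurd h.1 (by omega)
  | cons a l ih =>
    by_cases hac : a = c
    · subst hac
      rcases k with _ | _ | k
      · exact absurd h.1 (by omega)
      · simp [pos_cons_self_one]
      · rw [pos_cons_self_succ a k.succ_ne_zero]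
        have hk := ih (k := k + 1) ⟨by omega, by simpa [mem_occ] using h.2⟩
        simp [shiftPos_of_ne_zero hk]
    · rw [pos_cons_of_ne hac]
      have hk := ih (k := k) (by simpa [mem_occ, List.count_cons, hac] using h)
      simp [shiftPos_of_ne_zero hk]

lemma getElem?_of_pos_eq_succ {c : C} {k p : ℕ} {l : List C} (h : pos c k l = p + 1) :
    l[p]? = some c := by
  induction l generalizing k p with
  | nil => simp [pos] at h
  | cons a l ih =>
    by_cases hac : a = c
    · subst hac
      rcases k with _ | _ | k
      · simp [pos_zero] at h
      · obtain rfl : p = 0 := by rw [pos_cons_self_one] at h; omega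
        rfl
      · rw [pos_cons_self_succ a k.succ_ne_zero] at h
        rcases p with _ | p
        · exact absurd h (shiftPos_ne_one _)
        · simpa using ih (eq_of_shiftPos_eq_succ h)
    · rw [pos_cons_of_ne hac] at h
      rcases p with _ | p
      · exact absurd h (shiftPos_ne_one _)
      · simpa using ih (eq_of_shiftPos_eq_succ h)

lemma pos_one_eq_idxOf {c : C} {l : List C} (h : c ∈ l) : pos c 1 l = l.idxOf c + 1 := by
  induction l with
  | nil => simp at h
  | cons a l ih =>
    by_cases hac : a = c
    · subst hac
      simp [pos_cons_self_one]
    · rw [pos_cons_of_ne hac, ih (by simpa [Ne.symm hac] using h), List.idxOf_cons_ne l hac]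
      rfl

lemma pos_cons_eq_succ (a : C) {e : C} {k : ℕ} {l : List C} (h : (e, k) ∈ occ l) :
    pos e (k + if a = e then 1 else 0) (a :: l) = pos e k l + 1 := by
  have hk := pos_ne_zero_of_mem_occ h
  split_ifs with hae
  · subst hae
    rw [pos_cons_self_succ a (by have := h.1; omega), shiftPos_of_ne_zero hk]
  · rw [pos_cons_of_ne hae, add_zero, shiftPos_of_ne_zero hk]

lemma pos_cons_cons_swap {c d : C} (hcd : c ≠ d) (w : List C) (e : C) (k : ℕ) :
    pos e k (d :: c :: w) = Equiv.swap 1 2 (pos e k (c :: d :: w)) := by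
  have hfirst : ∀ {c d : C}, c ≠ d → ∀ k,
      pos c k (d :: c :: w) = Equiv.swap 1 2 (pos c k (c :: d :: w)) := by
    intro c d hcd k
    rcases k with _ | _ | k
    · rw [pos_zero, pos_zero]
      rfl
    · rw [pos_cons_self_one, pos_cons_of_ne hcd.symm, pos_cons_self_one]
      rfl
    · rw [pos_cons_self_succ _ k.succ_ne_zero, pos_cons_of_ne hcd.symm, pos_cons_of_ne hcd.symm,
        pos_cons_self_succ _ k.succ_ne_zero, swap_one_two_shiftPos_shiftPos]
  by_cases hec : e = c
  · subst hec
    exact hfirst hcd k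
  by_cases hed : e = d
  · subst hed
    rw [hfirst (Ne.symm hcd), Equiv.swap_apply_self]
  rw [pos_cons_of_ne (Ne.symm hec), pos_cons_of_ne (Ne.symm hed), pos_cons_of_ne (Ne.symm hed),
    pos_cons_of_ne (Ne.symm hec), swap_one_two_shiftPos_shiftPos]

lemma pos_append_swap {c d : C} (hcd : c ≠ d) (z w : List C) (e : C) (k : ℕ) :
    pos e k (z ++ d :: c :: w) =
      Equiv.swap (z.length + 1) (z.length + 2) (pos e k (z ++ c :: d :: w)) := by
  induction z generalizing k with
  | nil => exact pos_cons_cons_swap hcd w e k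
  | cons a z ih =>
    simp only [List.cons_append, List.length_cons]
    by_cases hae : a = e
    · subst hae
      rcases k with _ | _ | k
      · rw [pos_zero, pos_zero, Equiv.swap_apply_of_ne_of_ne] <;> omega
      · rw [pos_cons_self_one, pos_cons_self_one, Equiv.swap_apply_of_ne_of_ne] <;> omega
      · rw [pos_cons_self_succ _ k.succ_ne_zero, pos_cons_self_succ _ k.succ_ne_zero, ih,
          shiftPos_swap]
    · rw [pos_cons_of_ne hae, pos_cons_of_ne hae, ih, shiftPos_swap]

def SameOccOrder (comm : C → C → Prop) (x y : List C) : Prop :=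
  occ x = occ y ∧
    ∀ c d, ¬ comm c d → ∀ i j, (c, i) ∈ occ x → (d, j) ∈ occ x →
      (pos c i x < pos d j x ↔ pos c i y < pos d j y)

namespace SameOccOrder

variable {comm : C → C → Prop} {x y z : List C}

protected lemma refl (comm : C → C → Prop) (x : List C) : SameOccOrder comm x x :=
  ⟨rfl, fun _ _ _ _ _ _ _ => Iff.rfl⟩

protected lemma symm (h : SameOccOrder comm x y) : SameOccOrder comm y x :=
  ⟨h.1.symm, fun c d hcd i j hi hj => (h.2 c d hcd i j (h.1 ▸ hi) (h.1 ▸ hj)).symm⟩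

protected lemma trans (h₁ : SameOccOrder comm x y) (h₂ : SameOccOrder comm y z) :
    SameOccOrder comm x z :=
  ⟨h₁.1.trans h₂.1, fun c d hcd i j hi hj =>
    (h₁.2 c d hcd i j hi hj).trans (h₂.2 c d hcd i j (h₁.1 ▸ hi) (h₁.1 ▸ hj))⟩

lemma of_swapStep (hsymm : Symmetric comm) (h : SwapStep comm x y) : SameOccOrder comm x y := by
  obtain ⟨z, w, c, d, hcomm, rfl, rfl⟩ := h
  by_cases hcd : c = d
  · subst hcd
    exact .refl _ _
  refine ⟨occ_eq_occ_iff_perm.mpr ((List.Perm.swap d c w).append_left z),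
    fun e f hef i j _ _ => ?_⟩
  have hletters : ∀ {e f : C} {i j : ℕ}, pos e i (z ++ c :: d :: w) = z.length + 1 →
      pos f j (z ++ c :: d :: w) = z.length + 2 → e = c ∧ f = d := by
    intro e f i j he hf
    have he' := getElem?_of_pos_eq_succ he
    have hf' := getElem?_of_pos_eq_succ hf
    rw [List.getElem?_append_right (by omega), Nat.sub_self] at he'
    rw [List.getElem?_append_right (by omega), Nat.add_sub_cancel_left] at hf'
    exact ⟨(Option.some.inj he').symm, (Option.some.inj hf').symm⟩
  rw [pos_append_swap hcd, pos_append_swap hcd]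
  -- a non-commuting pair cannot occupy the two transposed positions
  refine (swap_lt_swap_iff ?_ ?_).symm
  · rintro ⟨he, hf⟩
    obtain ⟨rfl, rfl⟩ := hletters he hf
    exact hef hcomm
  · rintro ⟨he, hf⟩
    obtain ⟨rfl, rfl⟩ := hletters hf he
    exact hef (hsymm hcomm)

lemma of_wordEquiv (hsymm : Symmetric comm) (h : WordEquiv comm x y) : SameOccOrder comm x y := by
  induction h with
  | refl => exact .refl _ _
  | tail _ hstep ih => exact ih.trans (of_swapStep hsymm hstep)

lemma of_cons {a : C} (h : SameOccOrder comm (a :: x) (a :: y)) : SameOccOrder comm x y := by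
  obtain ⟨hocc, hord⟩ := h
  have hocc' : occ x = occ y :=
    occ_eq_occ_iff_perm.mpr ((List.perm_cons a).mp (occ_eq_occ_iff_perm.mp hocc))
  refine ⟨hocc', fun c d hcd i j hi hj => ?_⟩
  have horder := hord c d hcd _ _ (mem_occ_cons a hi) (mem_occ_cons a hj)
  rwa [pos_cons_eq_succ a hi, pos_cons_eq_succ a hj, pos_cons_eq_succ a (hocc' ▸ hi),
    pos_cons_eq_succ a (hocc' ▸ hj), Nat.add_lt_add_iff_right, Nat.add_lt_add_iff_right] at horder

lemma comm_of_mem_prefix {a b : C} {u v : List C} (h : SameOccOrder comm (a :: x) (u ++ a :: v))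
    (hau : a ∉ u) (hbu : b ∈ u) : comm a b := by
  by_contra hab
  have hba : b ≠ a := fun hba => hau (hba ▸ hbu)
  have hbx : b ∈ a :: x :=
    (occ_eq_occ_iff_perm.mp h.1).mem_iff.mpr (List.mem_append_left _ hbu)
  have horder := h.2 a b hab 1 1 (mem_occ_one.mpr List.mem_cons_self) (mem_occ_one.mpr hbx)
  rw [pos_one_eq_idxOf List.mem_cons_self, pos_one_eq_idxOf hbx,
    pos_one_eq_idxOf List.mem_append_cons_self, pos_one_eq_idxOf (List.mem_append_left _ hbu),
    List.idxOf_cons_self, List.idxOf_cons_ne _ hba.symm, List.idxOf_append_of_notMem hau,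
    List.idxOf_append_of_mem hbu, List.idxOf_cons_self] at horder
  have := List.idxOf_lt_length_of_mem hbu
  omega

lemma wordEquiv (hsymm : Symmetric comm) (h : SameOccOrder comm x y) : WordEquiv comm x y := by
  induction x generalizing y with
  | nil =>
    obtain rfl : y = [] := List.nil_perm.mp (occ_eq_occ_iff_perm.mp h.1)
    exact .refl
  | cons a x ih =>
    have hay : a ∈ y := (occ_eq_occ_iff_perm.mp h.1).subset List.mem_cons_self
    obtain ⟨u, v, rfl, hau⟩ := List.eq_append_cons_of_mem hay
    have hbubble := wordEquiv_cons_append (v := v) fun b => h.comm_of_mem_prefix hau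
    have htail := (h.trans (of_wordEquiv hsymm hbubble).symm).of_cons
    exact (WordEquiv.cons a (ih htail)).trans hbubble

end SameOccOrder

end

theorem wordEquiv_iff_occ_and_order_general {C : Type*} [DecidableEq C]
    (comm : C → C → Prop) (hsymm : Symmetric comm)
    (x y : List C) :
    WordEquiv comm x y ↔
      occ x = occ y ∧
        ∀ c d, ¬ comm c d → ∀ i j, (c, i) ∈ occ x → (d, j) ∈ occ x →
          (pos c i x < pos d j x ↔ pos c i y < pos d j y) :=
  ⟨SameOccOrder.of_wordEquiv hsymm, SameOccOrder.wordEquiv hsymm⟩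

/-- `x ≡ y` iff `occ x = occ y` and non-commuting occurrences are
ordered identically in `x` and `y`. -/
theorem wordEquiv_iff_occ_and_order {C : Type*} [DecidableEq C]
    (comm : C → C → Prop) (hsymm : Symmetric comm) (hrefl : Reflexive comm)
    (x y : List C) :
    WordEquiv comm x y ↔
      occ x = occ y ∧
        ∀ c d, ¬ comm c d → ∀ i j, (c, i) ∈ occ x → (d, j) ∈ occ x →
          (pos c i x < pos d j x ↔ pos c i y < pos d j y) :=
  wordEquiv_iff_occ_and_order_general comm hsymm x y
end

section
/- If x ≡ y (words equivalent up to transposing adjacent commuting commands), then applying the state machine from the initial state yields the same response value at each occurrence: for every commanded occurrence c^i, τ*(s₀, x↾c^i).val = τ*(s₀, y↾c^i).val, where x↾c^i is the prefix of x up to and including the i-th occurrence of c. -/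
/-- Repeated application of the transition function `τ` over a command word,
returning the final state and the response value of the last command
(`nil` for the empty word). -/
def tauStar {S C V : Type*} (τ : S → C → S × V) (nil : V) : S → List C → S × V
  | s, [] => (s, nil)
  | s, [c] => τ s c
  | s, c :: w => tauStar τ nil (τ s c).1 w

/-- Commutation of two commands: transposing them yields the same state and
leaves each command's response value unchanged, in every state. -/
def Commutes {S C V : Type*} (τ : S → C → S × V) (nil : V) (c d : C) : Prop :=
  ∀ s : S,
    (tauStar τ nil s [c, d]).1 = (tauStar τ nil s [d, c]).1 ∧
    (tauStar τ nil s [d, c]).2 = (tauStar τ nil s [c]).2 ∧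
    (tauStar τ nil s [c, d]).2 = (tauStar τ nil s [d]).2

/-!
A transposition step turns `z ++ c :: d :: w` into `z ++ d :: c :: w`, a permutation, so the
occurrence `a^i` exists all along the chain and a single step suffices. Peeling off `z`, the
prefix up to `a^i` ends either at the transposed `c` (compare `[c]` with `[d, c]`: second clause
of `Commutes`), at `d` (the symmetric case), or after both, where `c d` and `d c` reach the same
state.
-/

section Pos

variable {C : Type*} [DecidableEq C] {c a : C} {i : ℕ} {l : List C}

lemma pos_one_cons_self : pos c 1 (c :: l) = 1 := by
  simp [pos]

lemma pos_succ_cons_self (hi : 1 ≤ i) (h : 0 < pos c i l) :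
    pos c (i + 1) (c :: l) = pos c i l + 1 := by
  obtain ⟨p, hp⟩ := Nat.exists_eq_add_one_of_ne_zero h.ne'
  simp [pos, hp]
  omega

lemma pos_cons_of_ne_s4 (ha : a ≠ c) (h : 0 < pos c i l) :
    pos c i (a :: l) = pos c i l + 1 := by
  obtain ⟨p, hp⟩ := Nat.exists_eq_add_one_of_ne_zero h.ne'
  simp [pos, ha, hp]

lemma pos_pos (hi : 1 ≤ i) (hil : i ≤ l.count c) : 0 < pos c i l := by
  induction l generalizing i with
  | nil => simp at hil; omega
  | cons a l ih =>
    by_cases ha : a = c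
    · subst ha
      obtain rfl | ⟨j, hj, rfl⟩ : i = 1 ∨ ∃ j, 1 ≤ j ∧ i = j + 1 := by
        rcases i with _ | _ | j <;> simp_all
      · simp [pos_one_cons_self]
      · rw [List.count_cons_self] at hil
        rw [pos_succ_cons_self hj (ih hj (by omega))]
        omega
    · rw [List.count_cons_of_ne ha] at hil
      rw [pos_cons_of_ne_s4 ha (ih hi hil)]
      omega

lemma take_pos_one_cons_self : (c :: l).take (pos c 1 (c :: l)) = [c] := by
  rw [pos_one_cons_self, List.take_one, List.head?_cons, Option.toList_some]

lemma take_pos_succ_cons_self (hi : 1 ≤ i) (hil : i ≤ l.count c) :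
    (c :: l).take (pos c (i + 1) (c :: l)) = c :: l.take (pos c i l) := by
  rw [pos_succ_cons_self hi (pos_pos hi hil), List.take_succ_cons]

lemma take_pos_cons_of_ne (ha : a ≠ c) (hi : 1 ≤ i) (hil : i ≤ l.count c) :
    (a :: l).take (pos c i (a :: l)) = a :: l.take (pos c i l) := by
  rw [pos_cons_of_ne_s4 ha (pos_pos hi hil), List.take_succ_cons]

lemma take_pos_ne_nil (hi : 1 ≤ i) (hil : i ≤ l.count c) : l.take (pos c i l) ≠ [] := by
  rw [Ne, List.take_eq_nil_iff, not_or]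
  refine ⟨(pos_pos hi hil).ne', ?_⟩
  rintro rfl
  simp at hil
  omega

end Pos

section TauStar

variable {S C V : Type*} {τ : S → C → S × V} {nil : V}

lemma tauStar_cons_of_ne_nil (s : S) (a : C) {t : List C} (ht : t ≠ []) :
    tauStar τ nil s (a :: t) = tauStar τ nil (τ s a).1 t := by
  cases t with
  | nil => contradiction
  | cons => rfl

lemma Commutes.symm {c d : C} (h : Commutes τ nil c d) : Commutes τ nil d c :=
  fun s ↦ ⟨(h s).1.symm, (h s).2.2, (h s).2.1⟩

lemma Commutes.tauStar_cons_cons {c d : C} (h : Commutes τ nil c d) (s : S) {t : List C}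
    (ht : t ≠ []) : tauStar τ nil s (c :: d :: t) = tauStar τ nil s (d :: c :: t) := by
  simp only [tauStar_cons_of_ne_nil _ _ ht, tauStar_cons_of_ne_nil _ _ (List.cons_ne_nil _ t)]
  exact congrArg (tauStar τ nil · t) (h s).1

variable [DecidableEq C] {a c d : C} {i : ℕ} {w : List C}

lemma Commutes.tauStar_take_pos_cons_cons_self (h : Commutes τ nil c d) (hcd : c ≠ d)
    (hi : 1 ≤ i) (hiw : i ≤ (c :: d :: w).count c) (s : S) :
    (tauStar τ nil s ((c :: d :: w).take (pos c i (c :: d :: w)))).2 =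
      (tauStar τ nil s ((d :: c :: w).take (pos c i (d :: c :: w)))).2 := by
  obtain rfl | ⟨j, hj, rfl⟩ : i = 1 ∨ ∃ j, 1 ≤ j ∧ i = j + 1 := by
    rcases i with _ | _ | j <;> simp_all
  · rw [take_pos_one_cons_self, take_pos_cons_of_ne hcd.symm le_rfl (by simp),
      take_pos_one_cons_self]
    exact ((h s).2.1).symm
  · rw [List.count_cons_self, List.count_cons_of_ne hcd.symm] at hiw
    have hjw : j ≤ w.count c := by omega
    rw [take_pos_succ_cons_self hj (by rwa [List.count_cons_of_ne hcd.symm]),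
      take_pos_cons_of_ne hcd.symm hj hjw, take_pos_cons_of_ne hcd.symm (by omega)
        (by rw [List.count_cons_self]; omega),
      take_pos_succ_cons_self hj hjw, h.tauStar_cons_cons s (take_pos_ne_nil hj hjw)]

lemma Commutes.tauStar_take_pos_cons_cons (h : Commutes τ nil c d) (hi : 1 ≤ i)
    (hiw : i ≤ (c :: d :: w).count a) (s : S) :
    (tauStar τ nil s ((c :: d :: w).take (pos a i (c :: d :: w)))).2 =
      (tauStar τ nil s ((d :: c :: w).take (pos a i (d :: c :: w)))).2 := by
  by_cases hcd : c = d
  · rw [hcd]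
  by_cases hc : c = a
  · subst hc
    exact h.tauStar_take_pos_cons_cons_self hcd hi hiw s
  by_cases hd : d = a
  · subst hd
    rw [← (List.Perm.swap c d w).count_eq] at hiw
    exact (h.symm.tauStar_take_pos_cons_cons_self (Ne.symm hcd) hi hiw s).symm
  rw [List.count_cons_of_ne hc, List.count_cons_of_ne hd] at hiw
  rw [take_pos_cons_of_ne hc hi (by rwa [List.count_cons_of_ne hd]),
    take_pos_cons_of_ne hd hi hiw, take_pos_cons_of_ne hd hi (by rwa [List.count_cons_of_ne hc]),
    take_pos_cons_of_ne hc hi hiw, h.tauStar_cons_cons s (take_pos_ne_nil hi hiw)]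

lemma Commutes.tauStar_take_pos_append_cons_cons (h : Commutes τ nil c d) (z : List C)
    (hi : 1 ≤ i) (hiw : i ≤ (z ++ c :: d :: w).count a) (s : S) :
    (tauStar τ nil s ((z ++ c :: d :: w).take (pos a i (z ++ c :: d :: w)))).2 =
      (tauStar τ nil s ((z ++ d :: c :: w).take (pos a i (z ++ d :: c :: w)))).2 := by
  induction z generalizing i s with
  | nil => exact h.tauStar_take_pos_cons_cons hi hiw s
  | cons b z ih =>
    have hcount : (z ++ d :: c :: w).count a = (z ++ c :: d :: w).count a :=
      ((List.Perm.swap c d w).append_left z).count_eq a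
    simp only [List.cons_append] at hiw ⊢
    by_cases hb : b = a
    · subst hb
      obtain rfl | ⟨j, hj, rfl⟩ : i = 1 ∨ ∃ j, 1 ≤ j ∧ i = j + 1 := by
        rcases i with _ | _ | j <;> simp_all
      · rw [take_pos_one_cons_self, take_pos_one_cons_self]
      · rw [List.count_cons_self] at hiw
        have hjw : j ≤ (z ++ c :: d :: w).count b := by omega
        rw [take_pos_succ_cons_self hj hjw, take_pos_succ_cons_self hj (hcount ▸ hjw),
          tauStar_cons_of_ne_nil _ _ (take_pos_ne_nil hj hjw),
          tauStar_cons_of_ne_nil _ _ (take_pos_ne_nil hj (hcount ▸ hjw)), ih hj hjw]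
    · rw [List.count_cons_of_ne hb] at hiw
      rw [take_pos_cons_of_ne hb hi hiw, take_pos_cons_of_ne hb hi (hcount ▸ hiw),
        tauStar_cons_of_ne_nil _ _ (take_pos_ne_nil hi hiw),
        tauStar_cons_of_ne_nil _ _ (take_pos_ne_nil hi (hcount ▸ hiw)), ih hi hiw]

end TauStar

lemma SwapStep.perm {C : Type*} {comm : C → C → Prop} {x y : List C} (h : SwapStep comm x y) :
    x.Perm y := by
  obtain ⟨z, w, c, d, -, rfl, rfl⟩ := h
  exact (List.Perm.swap d c w).append_left z

lemma WordEquiv.perm {C : Type*} {comm : C → C → Prop} {x y : List C}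
    (h : WordEquiv comm x y) : x.Perm y := by
  induction h with
  | refl => rfl
  | tail _ hstep ih => exact ih.trans hstep.perm

/-- if `x ≡ y` then every occurrence `c^i` yields the same
response value from the initial state, where `x.take (pos c i x)` is the
prefix of `x` up to and including the i-th occurrence of `c`. -/
theorem wordEquiv_value_eq {S C V : Type*} [DecidableEq C]
    (τ : S → C → S × V) (nil : V) (s₀ : S) (x y : List C)
    (h : WordEquiv (Commutes τ nil) x y)
    (c : C) (i : ℕ) (hi : 1 ≤ i) (hix : i ≤ x.count c) :
    (tauStar τ nil s₀ (x.take (pos c i x))).2 =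
      (tauStar τ nil s₀ (y.take (pos c i y))).2 := by
  induction h with
  | refl => rfl
  | tail hxz hstep ih =>
    obtain ⟨z, w, c', d', hcomm, rfl, rfl⟩ := hstep
    rw [(WordEquiv.perm hxz).count_eq] at hix
    exact ih.trans (hcomm.tauStar_take_pos_append_cons_cons z hi hix s₀)
end

section
/- Quorum intersection for dependency computation: suppose two conflicting commands have dependency sets D and D' computed as unions of reported dependencies over majority quorums Q and Q' of an n-process system (|Q|, |Q'| ≥ ⌊n/2⌋ + 1), where each process reports id' in its set for id whenever it processed id' before id, and processes any two commands in some order. Then id' ∈ D or id ∈ D'. -/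
open Finset

theorem Finset.inter_nonempty_of_majority {α : Type*} [Fintype α] [DecidableEq α]
    {Q Q' : Finset α} (hQ : Fintype.card α / 2 + 1 ≤ #Q)
    (hQ' : Fintype.card α / 2 + 1 ≤ #Q') : (Q ∩ Q').Nonempty :=
  inter_nonempty_of_card_lt_card_add_card (subset_univ Q) (subset_univ Q')
    (by rw [card_univ]; omega)

theorem majority_dependency_intersection_general
    {I : Type*} (n : ℕ) (id id' : I)
    (Q Q' : Finset (Fin n))
    (hQ : n / 2 + 1 ≤ Q.card) (hQ' : n / 2 + 1 ≤ Q'.card)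
    (before : Fin n → I → I → Prop)
    (htotal : ∀ j : Fin n, before j id id' ∨ before j id' id)
    (D D' : Set I)
    (hD : D = {b | ∃ j ∈ Q, before j b id})
    (hD' : D' = {b | ∃ j ∈ Q', before j b id'}) :
    id' ∈ D ∨ id ∈ D' := by
  subst hD hD'
  obtain ⟨j, hj⟩ := inter_nonempty_of_majority (Q := Q) (Q' := Q')
    (by rwa [Fintype.card_fin]) (by rwa [Fintype.card_fin])
  rw [mem_inter] at hj
  rcases htotal j with h | h
  · exact Or.inr ⟨j, hj.2, h⟩
  · exact Or.inl ⟨j, hj.1, h⟩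

/-- Property 1, quorum intersection for dependency computation:
for two conflicting commands `id ≠ id'` whose dependency sets `D`, `D'` are
unions of per-process reports over majority quorums `Q`, `Q'`, either
`id' ∈ D` or `id ∈ D'`. Each process `j` reports `b` as a dependency of `a`
iff it received `b` before `a`, and processes the two commands in some
order. -/
theorem majority_dependency_intersection
    {I : Type*} (n : ℕ) (id id' : I) (hne : id ≠ id')
    (Q Q' : Finset (Fin n))
    (hQ : n / 2 + 1 ≤ Q.card) (hQ' : n / 2 + 1 ≤ Q'.card)
    (before : Fin n → I → I → Prop)
    (htotal : ∀ j : Fin n, before j id id' ∨ before j id' id)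
    (D D' : Set I)
    (hD : D = {b | ∃ j ∈ Q, before j b id})
    (hD' : D' = {b | ∃ j ∈ Q', before j b id'}) :
    id' ∈ D ∨ id ∈ D' :=
  majority_dependency_intersection_general n id id' Q Q' hQ hQ' before htotal D D' hD hD'
end

section
/- Slow-path pruning preserves conflict coverage: let Q, Q' be sets of processes with |Q| = |Q'| = ⌊n/2⌋ + f, and D = ⊔_f_{Q} dep, D' = ⊔_f_{Q'} dep' be the multiplicity-≥f unions of reported dependencies for two conflicting identifiers id ≠ id', where every process reports one of the two identifiers as a dependency of the other (each process j that reports for both id and id' satisfies id' ∈ dep_j or id ∈ dep'_j). Then id' ∈ D or id ∈ D'. -/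
/-! If neither conclusion holds, fewer than `f` members of `Q` report `id'`, so more than `⌊n/2⌋`
of them do not; likewise more than `⌊n/2⌋` members of `Q'` do not report `id`. Two such
majorities of the `n` processes share a member, and that member violates the reporting
assumption. -/

open Finset

theorem Finset.lt_card_filter_not_of_card_filter_lt {α : Type*} {s : Finset α} {p : α → Prop}
    [DecidablePred p] {m f : ℕ} (hs : #s = m + f) (hp : #(s.filter p) < f) :
    m < #(s.filter fun a ↦ ¬ p a) := by
  have := card_filter_add_card_filter_not (s := s) p
  omega

theorem Finset.inter_nonempty_of_half_card_lt {α : Type*} [Fintype α] [DecidableEq α]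
    {s t : Finset α} {n : ℕ} (hα : Fintype.card α = n) (hs : n / 2 < #s) (ht : n / 2 < #t) :
    (s ∩ t).Nonempty :=
  inter_nonempty_of_card_lt_card_add_card (subset_univ s) (subset_univ t)
    (by rw [card_univ]; omega)

theorem pruned_dependency_intersection_general
    {I : Type*} [DecidableEq I] (n f : ℕ)
    (Q Q' : Finset (Fin n))
    (hQcard : Q.card = n / 2 + f) (hQ'card : Q'.card = n / 2 + f)
    (id id' : I)
    (dep dep' : Fin n → Finset I)
    (hreport : ∀ j : Fin n, j ∈ Q → j ∈ Q' → id' ∈ dep j ∨ id ∈ dep' j)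
    (D D' : Set I)
    (hD : D = {x | f ≤ (Q.filter (fun j => x ∈ dep j)).card})
    (hD' : D' = {x | f ≤ (Q'.filter (fun j => x ∈ dep' j)).card}) :
    id' ∈ D ∨ id ∈ D' := by
  subst hD hD'
  by_contra! hcon
  obtain ⟨hid', hid⟩ := hcon
  simp only [Set.mem_ofPred_eq, not_le] at hid' hid
  have hQmaj := lt_card_filter_not_of_card_filter_lt hQcard hid'
  have hQ'maj := lt_card_filter_not_of_card_filter_lt hQ'card hid
  obtain ⟨j, hj⟩ := inter_nonempty_of_half_card_lt (Fintype.card_fin n) hQmaj hQ'maj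
  simp only [mem_inter, mem_filter] at hj
  obtain ⟨⟨hjQ, hjdep⟩, hjQ', hjdep'⟩ := hj
  exact (hreport j hjQ hjQ').elim hjdep hjdep'

/-- slow-path pruning preserves conflict coverage. With
`D = ⊔_f_Q dep` and `D' = ⊔_f_{Q'} dep'` the multiplicity-≥f unions over
quorums of size `⌊n/2⌋ + f`, if every process in `Q ∩ Q'` reports one of the
two conflicting identifiers as a dependency of the other, then `id' ∈ D` or
`id ∈ D'`. -/
theorem pruned_dependency_intersection
    {I : Type*} [DecidableEq I] (n f : ℕ)
    (hf1 : 1 ≤ f) (hf2 : f ≤ (n - 1) / 2)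
    (Q Q' : Finset (Fin n))
    (hQcard : Q.card = n / 2 + f) (hQ'card : Q'.card = n / 2 + f)
    (id id' : I) (hne : id ≠ id')
    (dep dep' : Fin n → Finset I)
    (hreport : ∀ j : Fin n, j ∈ Q → j ∈ Q' → id' ∈ dep j ∨ id ∈ dep' j)
    (D D' : Set I)
    (hD : D = {x | f ≤ (Q.filter (fun j => x ∈ dep j)).card})
    (hD' : D' = {x | f ≤ (Q'.filter (fun j => x ∈ dep' j)).card}) :
    id' ∈ D ∨ id ∈ D' :=
  pruned_dependency_intersection_general n f Q Q' hQcard hQ'card id id' dep dep' hreport D D' hD hD'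
end

section
/- Legality of the constructed linearization: let δ be a word containing each submitted command once, ordered consistently with a relation that totally orders all pairs of non-commuting commands, and such that each local log λ_i satisfies [λ_i] ⊑ [δ]. Then for every command c occurring in λ_i, the response value computed locally, τ*(s₀, λ_i↾c).val, equals the response value in the linearization, τ*(s₀, δ↾c).val. -/
/-!
The response a word gives to a command `c` is computed at the first occurrence of `c`, so it
depends only on the state reached just before that occurrence. Transposing two adjacent commuting
commands `a b` preserves the state after them and the response of each of them, so this response
is invariant under `WordEquiv`. Since the first occurrence of a command of `λ` in `λ ++ z` lies
inside `λ`, the local response of `c` agrees with its response in any `δ` equivalent to `λ ++ z`.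
-/

section Response

variable {S C V : Type*} [DecidableEq C]

/-- For `c ∉ w` this is `nil`, since `pos c 1 w = 0`. -/
def responseAt (τ : S → C → S × V) (nil : V) (s : S) (w : List C) (c : C) : V :=
  (tauStar τ nil s (w.take (pos c 1 w))).2

variable {τ : S → C → S × V} {nil : V}

theorem responseAt_cons_self (s : S) (c : C) (w : List C) :
    responseAt τ nil s (c :: w) c = (τ s c).2 := by
  simp [responseAt, pos, tauStar]

theorem responseAt_cons_of_ne {a c : C} (hac : a ≠ c) (s : S) (w : List C) :
    responseAt τ nil s (a :: w) c = responseAt τ nil (τ s a).1 w c := by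
  unfold responseAt
  rcases w with _ | ⟨b, w⟩
  · simp [pos, hac, tauStar]
  · have hpos : pos c 1 (a :: b :: w) =
        match pos c 1 (b :: w) with
        | 0 => 0
        | p => p + 1 := by
      rw [pos.eq_2, if_neg hac]
    rw [hpos]
    cases pos c 1 (b :: w) with
    | zero => rfl
    | succ p => rfl

theorem responseAt_append_congr {x y : List C} {c : C}
    (h : ∀ t, responseAt τ nil t x c = responseAt τ nil t y c) (s : S) (z : List C) :
    responseAt τ nil s (z ++ x) c = responseAt τ nil s (z ++ y) c := by
  induction z generalizing s with
  | nil => exact h s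
  | cons a z ih =>
    by_cases hac : a = c
    · subst hac
      simp only [List.cons_append, responseAt_cons_self]
    · simp only [List.cons_append, responseAt_cons_of_ne hac, ih]

theorem responseAt_append_of_mem {u : List C} {c : C} (hc : c ∈ u) (s : S) (v : List C) :
    responseAt τ nil s (u ++ v) c = responseAt τ nil s u c := by
  induction u generalizing s with
  | nil => cases hc
  | cons a u ih =>
    by_cases hac : a = c
    · subst hac
      simp only [List.cons_append, responseAt_cons_self]
    · simp only [List.cons_append, responseAt_cons_of_ne hac]
      exact ih (List.mem_of_ne_of_mem (Ne.symm hac) hc) _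

theorem Commutes.responseAt_swap {a b : C} (hab : Commutes τ nil a b) (s : S) (w : List C)
    (c : C) : responseAt τ nil s (a :: b :: w) c = responseAt τ nil s (b :: a :: w) c := by
  obtain ⟨hstate, hresp_a, hresp_b⟩ := hab s
  simp only [tauStar] at hstate hresp_a hresp_b
  by_cases hac : a = c
  · subst hac
    by_cases hba : b = a
    · subst hba; rfl
    · rw [responseAt_cons_self, responseAt_cons_of_ne hba, responseAt_cons_self, hresp_a]
  · by_cases hbc : b = c
    · subst hbc
      rw [responseAt_cons_of_ne hac, responseAt_cons_self, responseAt_cons_self, hresp_b]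
    · simp only [responseAt_cons_of_ne hac, responseAt_cons_of_ne hbc, hstate]

theorem SwapStep.responseAt_eq {x y : List C} (h : SwapStep (Commutes τ nil) x y) (s : S)
    (c : C) : responseAt τ nil s x c = responseAt τ nil s y c := by
  obtain ⟨z, w, a, b, hab, rfl, rfl⟩ := h
  exact responseAt_append_congr (fun t => hab.responseAt_swap t w c) s z

theorem WordEquiv.responseAt_eq {x y : List C} (h : WordEquiv (Commutes τ nil) x y) (s : S)
    (c : C) : responseAt τ nil s x c = responseAt τ nil s y c := by
  induction h with
  | refl => rfl
  | tail _ hstep ih => exact ih.trans (hstep.responseAt_eq s c)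

end Response

theorem linearization_legal_general {S C V : Type*} [DecidableEq C]
    (τ : S → C → S × V) (nil : V) (s₀ : S)
    (δ lam : List C)
    (hpre : ∃ z, WordEquiv (Commutes τ nil) (lam ++ z) δ) :
    ∀ c ∈ lam,
      (tauStar τ nil s₀ (lam.take (pos c 1 lam))).2 =
        (tauStar τ nil s₀ (δ.take (pos c 1 δ))).2 := by
  obtain ⟨z, hequiv⟩ := hpre
  intro c hc
  calc responseAt τ nil s₀ lam c
      = responseAt τ nil s₀ (lam ++ z) c := (responseAt_append_of_mem hc s₀ z).symm
    _ = responseAt τ nil s₀ δ c := hequiv.responseAt_eq s₀ c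

/-- legality of the constructed linearization `δ`: it contains
each submitted command once, is ordered consistently with a relation `r`
totally ordering non-commuting commands, and each local log `λᵢ` (in which
each command occurs at most once) is a trace prefix of `δ`; hence every
command `c` of `λᵢ` gets the same response value locally and in `δ`. -/
theorem linearization_legal {S C V : Type*} [DecidableEq C]
    (τ : S → C → S × V) (nil : V) (s₀ : S)
    (δ lam : List C)
    (hδnodup : δ.Nodup)
    (r : C → C → Prop)
    (htotal : ∀ c d, c ∈ δ → d ∈ δ → c ≠ d → ¬ Commutes τ nil c d →
      r c d ∨ r d c)
    (hδord : ∀ c d, c ∈ δ → d ∈ δ → r c d → pos c 1 δ < pos d 1 δ)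
    (hcount : ∀ c : C, lam.count c ≤ 1)
    (hpre : ∃ z, WordEquiv (Commutes τ nil) (lam ++ z) δ) :
    ∀ c ∈ lam,
      (tauStar τ nil s₀ (lam.take (pos c 1 lam))).2 =
        (tauStar τ nil s₀ (δ.take (pos c 1 δ))).2 :=
  linearization_legal_general τ nil s₀ δ lam hpre
end
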